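/- arXiv:2401.12934 — 2 statements merged into one kernel-verified Lean document; each statement's English description precedes it below -/
import Mathlib

section
/- Parameter error bound for restricted OLS with omitted variables: if Y = X θ* + ε with θ* supported on ρ ⊆ I, the restricted OLS estimator θ̂_I = (X_Iᵀ X_I)^{-1} X_Iᵀ Y satisfies ‖θ̂_I − θ*_I‖₂ ≤ (√|I| / Λ_min(|I|)) · λ, provided ‖X_Iᵀ ε / n‖_∞ ≤ λ and the restricted minimal eigenvalue Λ_min(|I|) = min_{v≠0, ‖v‖₀≤|I|} ‖Xv‖₂²/(n‖v‖₂²) is positive. -/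
/-! With `M = X_I` and `δ = θ̂_I − θ*_I`, the support condition gives `Xθ* = Mθ*_I`, so the
normal equations become `MᵀMδ = Mᵀε`. Hence `‖Mδ‖² = ⟨δ, Mᵀε⟩ ≤ ‖δ‖₁ · nλ ≤ √|I| ‖δ‖₂ · nλ`.
On the other hand `Mδ = Xv` for the `|I|`-sparse extension `v` of `δ` by zero, so
`‖Mδ‖² ≥ Λmin n ‖δ‖₂²`; dividing by `n ‖δ‖₂` gives the bound. -/

open Matrix Finset

section ExtendByZero

variable {ι : Type*} {s : Finset ι}

theorem Finset.sum_extend_subtype_val [Fintype ι] {R M : Type*} [Zero R] [AddCommMonoid M]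
    (F : ι → R → M) (hF : ∀ j, F j 0 = 0) (f : s → R) :
    ∑ j, F j (Function.extend Subtype.val f 0 j) = ∑ j : s, F j (f j) := by
  have hout : ∀ j ∉ s, F j (Function.extend Subtype.val f 0 j) = 0 := fun j hj => by
    rw [Function.extend_apply' _ _ _ fun ⟨a, ha⟩ => hj (ha ▸ a.2), Pi.zero_apply, hF]
  rw [← sum_subset (subset_univ s) fun j _ hj => hout j hj, ← sum_coe_sort s]
  simp only [Subtype.val_injective.extend_apply]

theorem Finset.extend_subtype_val_restrict_eq_self {R : Type*} [Zero R] {w : ι → R}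
    (hw : ∀ j ∉ s, w j = 0) : Function.extend Subtype.val (fun j : s => w j) 0 = w := by
  funext j
  by_cases hj : j ∈ s
  · exact Subtype.val_injective.extend_apply _ _ ⟨j, hj⟩
  · rw [Function.extend_apply' _ _ _ fun ⟨a, ha⟩ => hj (ha ▸ a.2), hw j hj, Pi.zero_apply]

theorem Finset.card_filter_extend_subtype_val_ne_zero_le [Fintype ι] {R : Type*} [Zero R]
    [DecidableEq R] (f : s → R) :
    #{j | Function.extend Subtype.val f 0 j ≠ 0} ≤ #s := by
  refine card_le_card fun j hj => ?_
  by_contra hjs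
  rw [mem_filter, Function.extend_apply' _ _ _ fun ⟨a, ha⟩ => hjs (ha ▸ a.2)] at hj
  exact hj.2 rfl

theorem Matrix.mulVec_extend_subtype_val [Fintype ι] {m R : Type*} [NonUnitalNonAssocSemiring R]
    (X : Matrix m ι R) (f : s → R) :
    X *ᵥ Function.extend Subtype.val f 0 = X.submatrix id Subtype.val *ᵥ f := by
  funext i
  exact sum_extend_subtype_val (fun j r => X i j * r) (fun j => mul_zero _) f

end ExtendByZero

theorem Real.sum_abs_le_sqrt_card_mul_sqrt_sum_sq {ι : Type*} [Fintype ι] (u : ι → ℝ) :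
    ∑ j, |u j| ≤ √(Fintype.card ι) * √(∑ j, u j ^ 2) := by
  simpa using Real.sum_mul_le_sqrt_mul_sqrt univ (fun _ => 1) fun j => |u j|

theorem Matrix.dotProduct_le_sqrt_card_mul_sqrt_sum_sq_mul {ι : Type*} [Fintype ι]
    (u g : ι → ℝ) {C : ℝ} (hg : ∀ j, |g j| ≤ C) :
    u ⬝ᵥ g ≤ √(Fintype.card ι) * √(∑ j, u j ^ 2) * C := by
  rcases isEmpty_or_nonempty ι with hι | ⟨⟨j₀⟩⟩
  · simp
  calc u ⬝ᵥ g ≤ ∑ j, |u j| * C := sum_le_sum fun j _ =>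
        (le_abs_self _).trans ((abs_mul _ _).trans_le
          (mul_le_mul_of_nonneg_left (hg j) (abs_nonneg _)))
    _ = (∑ j, |u j|) * C := (sum_mul ..).symm
    _ ≤ _ := mul_le_mul_of_nonneg_right (Real.sum_abs_le_sqrt_card_mul_sqrt_sum_sq u)
        ((abs_nonneg _).trans (hg j₀))

theorem Matrix.mulVec_dotProduct_mulVec_eq_transpose_mul {m ι R : Type*} [Fintype m] [Fintype ι]
    [CommSemiring R] (M : Matrix m ι R) (u : ι → R) :
    (M *ᵥ u) ⬝ᵥ (M *ᵥ u) = u ⬝ᵥ (Mᵀ * M) *ᵥ u := by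
  rw [← mulVec_mulVec, dotProduct_mulVec u Mᵀ, vecMul_transpose]

theorem le_div_of_mul_sq_le_mul {b c x : ℝ} (hc : 0 < c) (hb : 0 ≤ b)
    (h : c * x ^ 2 ≤ b * x) : x ≤ b / c := by
  rw [le_div_iff₀ hc]
  rcases le_or_gt x 0 with hx | hx
  · nlinarith
  · nlinarith

/-- Parameter error bound for restricted OLS with a superset `I` of the true support:
if `Y = Xθ* + ε`, `θ*` is supported on `ρ ⊆ I`, the restricted OLS estimator `θ̂_I`
solves the normal equations on the columns `I`, the maximal correlation of noise with
the columns in `I` is at most `nλ`, and the restricted minimal eigenvalue over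
`|I|`-sparse vectors is `Λmin > 0`, then `‖θ̂_I − θ*_I‖₂ ≤ √|I| · λ / Λmin`. -/
theorem restricted_ols_parameter_error
    {n d : ℕ} (hn : 0 < n)
    (X : Matrix (Fin n) (Fin d) ℝ) (ε Y : Fin n → ℝ)
    (θstar : Fin d → ℝ) (ρ I : Finset (Fin d))
    (lam Λmin : ℝ)
    (hY : Y = X.mulVec θstar + ε)
    (hρI : ρ ⊆ I)
    (hsupp : ∀ j ∉ ρ, θstar j = 0)
    (θhat : {j // j ∈ I} → ℝ)
    (hnormal :
      ((X.submatrix id (Subtype.val : {j // j ∈ I} → Fin d)).transpose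
          * (X.submatrix id (Subtype.val : {j // j ∈ I} → Fin d))).mulVec θhat
        = (X.submatrix id (Subtype.val : {j // j ∈ I} → Fin d)).transpose.mulVec Y)
    (hnoise : ∀ j ∈ I, |(∑ i, X i j * ε i) / n| ≤ lam)
    (hΛpos : 0 < Λmin)
    (hΛ : ∀ v : Fin d → ℝ,
      (Finset.univ.filter (fun j => v j ≠ 0)).card ≤ I.card →
      Λmin * (n * ∑ j, (v j) ^ 2) ≤ ∑ i, (X.mulVec v i) ^ 2) :
    Real.sqrt (∑ j : {j // j ∈ I}, (θhat j - θstar j.val) ^ 2)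
      ≤ Real.sqrt I.card / Λmin * lam := by
  rcases I.eq_empty_or_nonempty with rfl | ⟨j₀, hj₀⟩
  · simp
  have hlam : 0 ≤ lam := (abs_nonneg _).trans (hnoise j₀ hj₀)
  have hn' : (0 : ℝ) < n := Nat.cast_pos.mpr hn
  set M := X.submatrix id (Subtype.val : {j // j ∈ I} → Fin d)
  set δ : {j // j ∈ I} → ℝ := fun j => θhat j - θstar j
  have hXθ : X *ᵥ θstar = M *ᵥ fun j => θstar j := by
    rw [← mulVec_extend_subtype_val,
      extend_subtype_val_restrict_eq_self fun j hj => hsupp j fun hjρ => hj (hρI hjρ)]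
  have hδ : (Mᵀ * M) *ᵥ δ = Mᵀ *ᵥ ε := by
    change (Mᵀ * M) *ᵥ (θhat - fun j : {j // j ∈ I} => θstar j) = _
    rw [mulVec_sub, hnormal, hY, hXθ, mulVec_add, mulVec_mulVec, add_sub_cancel_left]
  have hcorr : ∀ j, |(Mᵀ *ᵥ ε) j| ≤ lam * n := fun j => by
    have := hnoise j j.2
    rwa [abs_div, Nat.abs_cast, div_le_iff₀ hn'] at this
  have hlower : Λmin * (n * ∑ j, δ j ^ 2) ≤ (M *ᵥ δ) ⬝ᵥ (M *ᵥ δ) := by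
    have := hΛ _ (card_filter_extend_subtype_val_ne_zero_le δ)
    rw [mulVec_extend_subtype_val,
      sum_extend_subtype_val (fun _ r => r ^ 2) (fun _ => zero_pow two_ne_zero)] at this
    simpa only [dotProduct, sq] using this
  have hupper : (M *ᵥ δ) ⬝ᵥ (M *ᵥ δ) ≤ √I.card * √(∑ j, δ j ^ 2) * (lam * n) := by
    rw [mulVec_dotProduct_mulVec_eq_transpose_mul, hδ, ← Fintype.card_coe I]
    exact dotProduct_le_sqrt_card_mul_sqrt_sum_sq_mul δ _ hcorr
  have hsq : √(∑ j, δ j ^ 2) ^ 2 = ∑ j, δ j ^ 2 :=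
    Real.sq_sqrt (sum_nonneg fun j _ => sq_nonneg _)
  calc √(∑ j, δ j ^ 2) ≤ √I.card * lam * n / (Λmin * n) := by
        refine le_div_of_mul_sq_le_mul (by positivity) (by positivity) ?_
        rw [hsq]; linarith
    _ = √I.card / Λmin * lam := by field_simp
end

section
/- For a deterministic greedy policy derived from a coordinate-sparse q-function, the Bellman backup integrates out exogenous coordinates: if q_{t+1}(s,a) depends only on s^ρ, a* (s) = arg max_a q_{t+1}(s,a) depends only on s^ρ, and s_{t+1}^ρ ⊥ s_t^{ρc} | (s_t^ρ, a_t), then E[q_{t+1}(s_{t+1}, a*(s_{t+1})) | s_t, a_t] = E[q_{t+1}(s_{t+1}^ρ, a*(s_{t+1}^ρ)) | s_t^ρ, a_t], i.e., the backup is itself a function only of (s_t^ρ, a_t). -/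
/-! The greedy value `x ↦ q x (a* x)` factors through the map `x ↦ x^ρ` that zeroes the
coordinates outside `ρ`, so its integral against `P s a` is an integral against the law of
the next `ρ`-coordinates, which by conditional independence depends only on `(s^ρ, a)`. -/

open MeasureTheory

section FactorThroughMap

variable {α E : Type*} [MeasurableSpace α] [NormedAddCommGroup E] [NormedSpace ℝ E]
  {π : α → α} {f : α → E}

theorem integral_eq_integral_map_of_comp_eq (μ : Measure α) (hπ : Measurable π)
    (hf : AEStronglyMeasurable f (μ.map π)) (hfπ : ∀ x, f (π x) = f x) :
    ∫ x, f x ∂μ = ∫ y, f y ∂(μ.map π) := by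
  rw [integral_map hπ.aemeasurable hf]
  simp only [hfπ]

theorem integral_eq_of_map_eq_of_comp_eq {μ ν : Measure α} (hπ : Measurable π)
    (hf : StronglyMeasurable f) (hfπ : ∀ x, f (π x) = f x) (hμν : μ.map π = ν.map π) :
    ∫ x, f x ∂μ = ∫ x, f x ∂ν := by
  rw [integral_eq_integral_map_of_comp_eq μ hπ hf.aestronglyMeasurable hfπ,
    integral_eq_integral_map_of_comp_eq ν hπ hf.aestronglyMeasurable hfπ, hμν]

end FactorThroughMap

section ZeroOutside

variable {ι M : Type*} [DecidableEq ι] [Zero M] (ρ : Finset ι)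

def zeroOutside (x : ι → M) : ι → M := fun i => if i ∈ ρ then x i else 0

theorem zeroOutside_apply_of_mem (x : ι → M) {i : ι} (hi : i ∈ ρ) : zeroOutside ρ x i = x i :=
  if_pos hi

theorem measurable_zeroOutside [MeasurableSpace M] : Measurable (zeroOutside ρ : (ι → M) → ι → M) :=
  measurable_pi_lambda _ fun i => by
    by_cases hi : i ∈ ρ
    · simpa [zeroOutside, hi] using measurable_pi_apply i
    · simp [zeroOutside, hi]

theorem greedy_value_zeroOutside {A : Type*} {q : (ι → M) → A → ℝ} {astar : (ι → M) → A}
    (hq : ∀ (x y : ι → M) (a : A), (∀ i ∈ ρ, x i = y i) → q x a = q y a)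
    (hastar : ∀ x y : ι → M, (∀ i ∈ ρ, x i = y i) → astar x = astar y) (x : ι → M) :
    q (zeroOutside ρ x) (astar (zeroOutside ρ x)) = q x (astar x) := by
  have hagree : ∀ i ∈ ρ, zeroOutside ρ x i = x i := fun i hi => zeroOutside_apply_of_mem ρ x hi
  rw [hastar _ _ hagree, hq _ _ _ hagree]

end ZeroOutside

theorem sparse_greedy_backup_depends_only_on_sparse_coords_general
    {d : ℕ} {A : Type*}
    (ρ : Finset (Fin d))
    (P : (Fin d → ℝ) → A → Measure (Fin d → ℝ))
    (q : (Fin d → ℝ) → A → ℝ)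
    (astar : (Fin d → ℝ) → A)
    (hq : ∀ (x y : Fin d → ℝ) (a : A), (∀ i ∈ ρ, x i = y i) → q x a = q y a)
    (hastar_sparse : ∀ x y : Fin d → ℝ, (∀ i ∈ ρ, x i = y i) → astar x = astar y)
    (hmeas : Measurable (fun x : Fin d → ℝ => q x (astar x)))
    (hP : ∀ (s s' : Fin d → ℝ) (a : A), (∀ i ∈ ρ, s i = s' i) →
      (P s a).map (fun x i => if i ∈ ρ then x i else 0)
        = (P s' a).map (fun x i => if i ∈ ρ then x i else 0)) :
    ∀ (s s' : Fin d → ℝ) (a : A), (∀ i ∈ ρ, s i = s' i) →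
      (∫ x, q x (astar x) ∂ (P s a)) = ∫ x, q x (astar x) ∂ (P s' a) :=
  fun s s' a hss =>
    integral_eq_of_map_eq_of_comp_eq (measurable_zeroOutside ρ) hmeas.stronglyMeasurable
      (greedy_value_zeroOutside ρ hq hastar_sparse) (hP s s' a hss)

/-- For a greedy policy derived from a `ρ`-sparse q-function, the Bellman backup
integrates out the exogenous coordinates: if `q` and its greedy action `a*` depend only
on the `ρ`-coordinates of the state and the next-state `ρ`-coordinates are conditionally
independent of the current non-`ρ` coordinates given the current `ρ`-coordinates and the
action, then `E[q(s', a*(s')) | s, a]` depends only on `(s^ρ, a)`. -/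
theorem sparse_greedy_backup_depends_only_on_sparse_coords
    {d : ℕ} {A : Type*}
    (ρ : Finset (Fin d))
    (P : (Fin d → ℝ) → A → Measure (Fin d → ℝ))
    (q : (Fin d → ℝ) → A → ℝ)
    (astar : (Fin d → ℝ) → A)
    (hq : ∀ (x y : Fin d → ℝ) (a : A), (∀ i ∈ ρ, x i = y i) → q x a = q y a)
    (hastar_max : ∀ (x : Fin d → ℝ) (b : A), q x b ≤ q x (astar x))
    (hastar_sparse : ∀ x y : Fin d → ℝ, (∀ i ∈ ρ, x i = y i) → astar x = astar y)
    (hmeas : Measurable (fun x : Fin d → ℝ => q x (astar x)))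
    (hP : ∀ (s s' : Fin d → ℝ) (a : A), (∀ i ∈ ρ, s i = s' i) →
      (P s a).map (fun x i => if i ∈ ρ then x i else 0)
        = (P s' a).map (fun x i => if i ∈ ρ then x i else 0)) :
    ∀ (s s' : Fin d → ℝ) (a : A), (∀ i ∈ ρ, s i = s' i) →
      (∫ x, q x (astar x) ∂ (P s a)) = ∫ x, q x (astar x) ∂ (P s' a) :=
  sparse_greedy_backup_depends_only_on_sparse_coords_general ρ P q astar hq hastar_sparse hmeas hP
end
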